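/- arXiv:1903.10949 — 4 statements merged into one kernel-verified Lean document; each statement's English description precedes it below -/
import Mathlib

section
/- For every natural number n and angles θ : Fin n → ℝ, the Gray code map g (which is a bijection of the set of n-bit strings) simultaneously permutes the rows and columns of the classical transition probability matrix onto the Gray-ordered quantum transition probability matrix: for all n-bit strings J' and J, P^qG_{J',J} = P^cl_{g(J'), g(J)}. In particular, there exists a permutation of the n-bit strings mapping the classical transition probability matrix to the Gray-ordered quantum transition probability matrix. -/
/-- The bit `B_{ℓ+1}` of an `n`-bit string, with the convention `B_n = 0`. -/
def nextBit (n : ℕ) (B : Fin n → ZMod 2) (ℓ : Fin n) : ZMod 2 :=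
  if h : (ℓ : ℕ) + 1 < n then B ⟨(ℓ : ℕ) + 1, h⟩ else 0

/-- The Gray code map on `n`-bit strings: `g(B)_ℓ = B_{ℓ+1} ⊕ B_ℓ` with `B_n = 0`. -/
def gray (n : ℕ) (B : Fin n → ZMod 2) : Fin n → ZMod 2 :=
  fun ℓ => nextBit n B ℓ + B ℓ

/-- Classical random-walk kernel. -/
noncomputable def fcl (n : ℕ) (θ : Fin n → ℝ) (I : Fin n → ZMod 2) : ℝ :=
  ∏ ℓ : Fin n,
    if I ℓ = 0 then Real.cos (θ ℓ / 2) ^ 2 else Real.sin (θ ℓ / 2) ^ 2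

/-- Gray-ordered quantum random-walk kernel, with the convention `I_n = 0`. -/
noncomputable def fqG (n : ℕ) (θ : Fin n → ℝ) (I : Fin n → ZMod 2) : ℝ :=
  ∏ ℓ : Fin n,
    if I ℓ + nextBit n I ℓ = 0 then Real.cos (θ ℓ / 2) ^ 2 else Real.sin (θ ℓ / 2) ^ 2

/-- Classical transition probability matrix. -/
noncomputable def Pcl (n : ℕ) (θ : Fin n → ℝ) :
    Matrix (Fin n → ZMod 2) (Fin n → ZMod 2) ℝ :=
  Matrix.of fun J' J => fcl n θ (J' + J)

/-- Gray-ordered quantum transition probability matrix. -/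
noncomputable def PqG (n : ℕ) (θ : Fin n → ℝ) :
    Matrix (Fin n → ZMod 2) (Fin n → ZMod 2) ℝ :=
  Matrix.of fun J' J => fqG n θ (J' + J)

/-!
The Gray code map `g` is additive, and the `ℓ`-th factor of `f_cl (g I)` is decided by
`I_{ℓ+1} + I_ℓ`, exactly as the `ℓ`-th factor of `f_qG I`; hence
`P^cl_{g J', g J} = f_cl (g J' + g J) = f_cl (g (J' + J)) = f_qG (J' + J) = P^qG_{J', J}`.
The map `g` is injective because `g B` determines `B` from the top bit `B_{n-1}` downwards,
so it is a permutation of the finite set of bit strings.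
-/

theorem gray_add (n : ℕ) (B C : Fin n → ZMod 2) :
    gray n (B + C) = gray n B + gray n C := by
  funext ℓ
  simp only [gray, nextBit, Pi.add_apply]
  split_ifs <;> ring

theorem fcl_gray (n : ℕ) (θ : Fin n → ℝ) (I : Fin n → ZMod 2) :
    fcl n θ (gray n I) = fqG n θ I := by
  simp only [fcl, fqG, gray, add_comm (nextBit n I _)]

theorem eq_of_gray_eq {n : ℕ} {B C : Fin n → ZMod 2} (h : gray n B = gray n C) (ℓ : Fin n) :
    B ℓ = C ℓ := by
  have hnext : nextBit n B ℓ = nextBit n C ℓ := by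
    unfold nextBit
    split_ifs
    · exact eq_of_gray_eq h _
    · rfl
  have hℓ : nextBit n B ℓ + B ℓ = nextBit n C ℓ + C ℓ := congrFun h ℓ
  rw [hnext] at hℓ
  exact add_left_cancel hℓ
termination_by n - ℓ

theorem gray_injective (n : ℕ) : Function.Injective (gray n) :=
  fun _ _ h => funext (eq_of_gray_eq h)

theorem stmt_4 (n : ℕ) (θ : Fin n → ℝ) :
    (∀ J' J : Fin n → ZMod 2, PqG n θ J' J = Pcl n θ (gray n J') (gray n J)) ∧
    ∃ π : Equiv.Perm (Fin n → ZMod 2),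
      ∀ J' J : Fin n → ZMod 2, PqG n θ J' J = Pcl n θ (π J') (π J) := by
  have hconj : ∀ J' J : Fin n → ZMod 2, PqG n θ J' J = Pcl n θ (gray n J') (gray n J) := by
    intro J' J
    simp only [PqG, Pcl, Matrix.of_apply, ← gray_add, fcl_gray]
  exact ⟨hconj, Equiv.ofBijective (gray n) (gray_injective n).bijective_of_finite, hconj⟩
end

section
/- For every natural number n, angles θ : Fin n → ℝ, and all n-bit strings J' and J, the square of the classical transition probability matrix factorizes bitwise: ((P^cl)²)_{J',J} = ∏_{ℓ=0}^{n−1} c_ℓ, where, writing I := J' ⊕ J, c_ℓ = cos⁴(θ_ℓ/2) + sin⁴(θ_ℓ/2) if I_ℓ = 0 and c_ℓ = 2 cos²(θ_ℓ/2) sin²(θ_ℓ/2) if I_ℓ = 1. -/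
/-!
`P^cl` is the `n`-fold tensor product of the one-bit matrices `[[c², s²], [s², c²]]`, so its
square is the tensor product of their squares: summing over the intermediate string factors into
independent sums over each intermediate bit, and a single bit gives `c⁴ + s⁴` on the diagonal and
`2c²s²` off it.
-/

theorem Fintype.sum_prod_add_mul_prod_add {ι G R : Type*} [Fintype ι] [DecidableEq ι]
    [Fintype G] [Add G] [CommSemiring R] (g : ι → G → R) (a b : ι → G) :
    ∑ K : ι → G, (∏ i, g i (a i + K i)) * ∏ i, g i (K i + b i) =
      ∏ i, ∑ k, g i (a i + k) * g i (k + b i) := by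
  simp_rw [← Finset.prod_mul_distrib]
  exact (Fintype.prod_sum fun i k => g i (a i + k) * g i (k + b i)).symm

theorem ZMod.two_sum_mul_add {R : Type*} [CommSemiring R] (g : ZMod 2 → R) (a b : ZMod 2) :
    ∑ k, g (a + k) * g (k + b) =
      if a + b = 0 then g 0 ^ 2 + g 1 ^ 2 else 2 * g 0 * g 1 := by
  have hsum : ∑ k, g (a + k) * g (k + b) = g (a + 0) * g (0 + b) + g (a + 1) * g (1 + b) :=
    Fin.sum_univ_two _
  have h11 : (1 + 1 : ZMod 2) = 0 := rfl
  have bit : ∀ x : ZMod 2, x = 0 ∨ x = 1 := by decide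
  rw [hsum]
  rcases bit a with rfl | rfl <;> rcases bit b with rfl | rfl <;> simp [h11] <;> ring

theorem stmt_13 (n : ℕ) (θ : Fin n → ℝ) (J' J : Fin n → ZMod 2) :
    (Pcl n θ ^ 2) J' J =
      ∏ ℓ : Fin n,
        if (J' + J) ℓ = 0 then
          Real.cos (θ ℓ / 2) ^ 4 + Real.sin (θ ℓ / 2) ^ 4
        else
          2 * Real.cos (θ ℓ / 2) ^ 2 * Real.sin (θ ℓ / 2) ^ 2 := by
  set g : Fin n → ZMod 2 → ℝ := fun ℓ x =>
    if x = 0 then Real.cos (θ ℓ / 2) ^ 2 else Real.sin (θ ℓ / 2) ^ 2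
  calc (Pcl n θ ^ 2) J' J
      = ∑ K : Fin n → ZMod 2, (∏ ℓ, g ℓ (J' ℓ + K ℓ)) * ∏ ℓ, g ℓ (K ℓ + J ℓ) := by
        rw [sq, Matrix.mul_apply]
        rfl
    _ = ∏ ℓ, ∑ k, g ℓ (J' ℓ + k) * g ℓ (k + J ℓ) := by
        rw [Fintype.sum_prod_add_mul_prod_add]
    _ = _ := by
        refine Finset.prod_congr rfl fun ℓ _ => ?_
        rw [ZMod.two_sum_mul_add]
        simp only [g, if_pos, one_ne_zero, if_false, ← pow_mul, Pi.add_apply]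
end

section
/- Let N be a positive integer, let P be an N×N real matrix with nonnegative entries whose every row sums to 1 (∑_J P_{I,J} = 1 for all I), let γ be a real number with 0 < γ < 1, let b : Fin N → ℝ, and let M ≥ 0 satisfy |b_I| ≤ M for all I. Set x := (1 − γ·P)⁻¹ *ᵥ b and, for a natural number c, set x⁽ᶜ⁾ := ∑_{s=0}^{c} γ^s · (P^s *ᵥ b). Then for every index I₀, the truncation error satisfies |x_{I₀} − x⁽ᶜ⁾_{I₀}| ≤ γ^{c+1} · M / (1 − γ). -/
/-!
Since `P` is row-stochastic, `‖P *ᵥ v‖ ≤ ‖v‖` in the sup norm, so `(1 - γ) ‖v‖ ≤ ‖(1 - γ • P) *ᵥ v‖`.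
This makes `A := 1 - γ • P` invertible with `‖A⁻¹ *ᵥ w‖ ≤ ‖w‖ / (1 - γ)`. The geometric sum identity
`A * ∑_{s ≤ c} (γ • P) ^ s = 1 - (γ • P) ^ (c + 1)` turns the truncation error into
`γ ^ (c + 1) • A⁻¹ *ᵥ (P ^ (c + 1) *ᵥ b)`, whose sup norm is at most `γ ^ (c + 1) * M / (1 - γ)`.
-/

open Matrix

namespace Matrix

variable {ι : Type*} [Fintype ι] [DecidableEq ι]

theorem norm_mulVec_le_of_mem_rowStochastic {P : Matrix ι ι ℝ} (hP : P ∈ rowStochastic ℝ ι)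
    (v : ι → ℝ) : ‖P *ᵥ v‖ ≤ ‖v‖ := by
  refine (pi_norm_le_iff_of_nonneg (norm_nonneg v)).2 fun i => ?_
  calc ‖(P *ᵥ v) i‖ = |∑ j, P i j * v j| := rfl
    _ ≤ ∑ j, |P i j * v j| := Finset.abs_sum_le_sum_abs _ _
    _ ≤ ∑ j, P i j * ‖v‖ := by
        gcongr with j
        rw [abs_mul, abs_of_nonneg (nonneg_of_mem_rowStochastic hP)]
        exact mul_le_mul_of_nonneg_left (norm_le_pi_norm v j) (nonneg_of_mem_rowStochastic hP)
    _ = ‖v‖ := by rw [← Finset.sum_mul, sum_row_of_mem_rowStochastic hP, one_mul]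

theorem mul_norm_le_norm_one_sub_smul_mulVec {P : Matrix ι ι ℝ} (hP : P ∈ rowStochastic ℝ ι)
    {γ : ℝ} (hγ : 0 ≤ γ) (v : ι → ℝ) : (1 - γ) * ‖v‖ ≤ ‖(1 - γ • P) *ᵥ v‖ := by
  have hv : v = (1 - γ • P) *ᵥ v + γ • (P *ᵥ v) := by
    rw [sub_mulVec, one_mulVec, smul_mulVec, sub_add_cancel]
  have : ‖v‖ ≤ ‖(1 - γ • P) *ᵥ v‖ + γ * ‖v‖ :=
    calc ‖v‖ ≤ ‖(1 - γ • P) *ᵥ v‖ + ‖γ • (P *ᵥ v)‖ := (congrArg norm hv).trans_le (norm_add_le _ _)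
      _ ≤ ‖(1 - γ • P) *ᵥ v‖ + γ * ‖v‖ := by
        rw [norm_smul, Real.norm_of_nonneg hγ]
        gcongr
        exact norm_mulVec_le_of_mem_rowStochastic hP v
  linarith

theorem isUnit_det_one_sub_smul_of_mem_rowStochastic {P : Matrix ι ι ℝ}
    (hP : P ∈ rowStochastic ℝ ι) {γ : ℝ} (hγ0 : 0 ≤ γ) (hγ1 : γ < 1) :
    IsUnit (1 - γ • P).det := by
  rw [← isUnit_iff_isUnit_det, ← mulVec_injective_iff_isUnit]
  intro u v huv
  have h := mul_norm_le_norm_one_sub_smul_mulVec hP hγ0 (u - v)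
  rw [mulVec_sub, huv, sub_self, norm_zero] at h
  have : ‖u - v‖ ≤ 0 := nonpos_of_mul_nonpos_right h (by linarith)
  exact sub_eq_zero.1 (norm_le_zero_iff.1 this)

theorem norm_inv_one_sub_smul_mulVec_le {P : Matrix ι ι ℝ} (hP : P ∈ rowStochastic ℝ ι)
    {γ : ℝ} (hγ0 : 0 ≤ γ) (hγ1 : γ < 1) (w : ι → ℝ) :
    ‖(1 - γ • P)⁻¹ *ᵥ w‖ ≤ ‖w‖ / (1 - γ) := by
  have hA := isUnit_det_one_sub_smul_of_mem_rowStochastic hP hγ0 hγ1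
  have h := mul_norm_le_norm_one_sub_smul_mulVec hP hγ0 ((1 - γ • P)⁻¹ *ᵥ w)
  rw [mulVec_mulVec, mul_nonsing_inv _ hA, one_mulVec] at h
  rw [le_div_iff₀ (by linarith), mul_comm]
  exact h

theorem inv_one_sub_sub_geom_sum {R : Type*} [CommRing R] (T : Matrix ι ι R)
    (hT : IsUnit (1 - T).det) (n : ℕ) :
    (1 - T)⁻¹ - ∑ s ∈ Finset.range n, T ^ s = (1 - T)⁻¹ * T ^ n := by
  have h : ∑ s ∈ Finset.range n, T ^ s = (1 - T)⁻¹ * (1 - T ^ n) := by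
    rw [← mul_neg_geom_sum, ← Matrix.mul_assoc, nonsing_inv_mul _ hT, Matrix.one_mul]
  rw [h, Matrix.mul_sub, Matrix.mul_one, sub_sub_cancel]

end Matrix

theorem stmt_17_general (N : ℕ) (P : Matrix (Fin N) (Fin N) ℝ)
    (hpos : ∀ I J, 0 ≤ P I J) (hrow : ∀ I, ∑ J, P I J = 1)
    (γ : ℝ) (hγ0 : 0 < γ) (hγ1 : γ < 1)
    (b : Fin N → ℝ) (M : ℝ) (hb : ∀ I, |b I| ≤ M)
    (c : ℕ) (I₀ : Fin N) :
    abs (((1 - γ • P)⁻¹ *ᵥ b) I₀ -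
        (∑ s ∈ Finset.range (c + 1), γ ^ s • (P ^ s *ᵥ b)) I₀) ≤
      γ ^ (c + 1) * M / (1 - γ) := by
  have hP : P ∈ rowStochastic ℝ (Fin N) := mem_rowStochastic_iff_sum.2 ⟨hpos, hrow⟩
  have hA := isUnit_det_one_sub_smul_of_mem_rowStochastic hP hγ0.le hγ1
  have : Nonempty (Fin N) := ⟨I₀⟩
  have hbM : ‖b‖ ≤ M := (pi_norm_le_iff_of_nonempty b).2 hb
  have herror : (1 - γ • P)⁻¹ *ᵥ b - ∑ s ∈ Finset.range (c + 1), γ ^ s • (P ^ s *ᵥ b) =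
      γ ^ (c + 1) • ((1 - γ • P)⁻¹ *ᵥ (P ^ (c + 1) *ᵥ b)) := by
    calc _ = ((1 - γ • P)⁻¹ - ∑ s ∈ Finset.range (c + 1), (γ • P) ^ s) *ᵥ b := by
          rw [sub_mulVec, sum_mulVec]
          simp only [smul_pow, smul_mulVec]
      _ = _ := by
          rw [inv_one_sub_sub_geom_sum _ hA, smul_pow, ← mulVec_mulVec, smul_mulVec, mulVec_smul]
  rw [← Pi.sub_apply, herror, Pi.smul_apply, smul_eq_mul, abs_mul,
    abs_of_nonneg (pow_nonneg hγ0.le _), mul_div_assoc]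
  gcongr
  calc |((1 - γ • P)⁻¹ *ᵥ (P ^ (c + 1) *ᵥ b)) I₀| ≤ ‖(1 - γ • P)⁻¹ *ᵥ (P ^ (c + 1) *ᵥ b)‖ :=
        norm_le_pi_norm ((1 - γ • P)⁻¹ *ᵥ (P ^ (c + 1) *ᵥ b)) I₀
    _ ≤ ‖P ^ (c + 1) *ᵥ b‖ / (1 - γ) := norm_inv_one_sub_smul_mulVec_le hP hγ0.le hγ1 _
    _ ≤ M / (1 - γ) := by
        gcongr
        exact (norm_mulVec_le_of_mem_rowStochastic (pow_mem hP _) b).trans hbM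

theorem stmt_17 (N : ℕ) (hN : 0 < N) (P : Matrix (Fin N) (Fin N) ℝ)
    (hpos : ∀ I J, 0 ≤ P I J) (hrow : ∀ I, ∑ J, P I J = 1)
    (γ : ℝ) (hγ0 : 0 < γ) (hγ1 : γ < 1)
    (b : Fin N → ℝ) (M : ℝ) (hM : 0 ≤ M) (hb : ∀ I, |b I| ≤ M)
    (c : ℕ) (I₀ : Fin N) :
    abs (((1 - γ • P)⁻¹ *ᵥ b) I₀ -
        (∑ s ∈ Finset.range (c + 1), γ ^ s • (P ^ s *ᵥ b)) I₀) ≤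
      γ ^ (c + 1) * M / (1 - γ) :=
  stmt_17_general N P hpos hrow γ hγ0 hγ1 b M hb c I₀
end

section
/- The Gray code gives single-distance coding of consecutive integers: for every natural number k, the bitwise XOR of the Gray codes of k and k+1 is a power of two, i.e. there exists a natural number t such that (k XOR (k/2)) XOR ((k+1) XOR ((k+1)/2)) = 2^t, where k/2 denotes the floor division (right shift by one bit). -/
/-!
Halving commutes with XOR, so the Gray code `k ↦ k ^^^ k / 2` is XOR-linear and the XOR of the
Gray codes of `k` and `k + 1` is the Gray code of `k ^^^ (k + 1)`. Adding one flips the trailing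
ones of `k` and the zero above them, so `k ^^^ (k + 1)` is a block of ones `2 ^ (n + 1) - 1`,
whose Gray code is `2 ^ n`.
-/

def grayCode (k : ℕ) : ℕ := k ^^^ k / 2

theorem grayCode_xor (a b : ℕ) : grayCode (a ^^^ b) = grayCode a ^^^ grayCode b := by
  simp only [grayCode, Nat.xor_div_two]
  ac_rfl

theorem grayCode_two_pow_sub_one (n : ℕ) : grayCode (2 ^ (n + 1) - 1) = 2 ^ n := by
  have hdiv : (2 ^ (n + 1) - 1) / 2 = 2 ^ n - 1 := by
    rw [Nat.pow_succ]; omega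
  rw [grayCode, hdiv]
  apply Nat.eq_of_testBit_eq
  intro i
  simp only [Nat.testBit_xor, Nat.testBit_two_pow_sub_one, Nat.testBit_two_pow]
  rcases lt_trichotomy i n with h | rfl | h
  · simp [h, h.ne', Nat.lt_succ_of_lt h]
  · simp
  · simp [h.ne, h.not_gt, Nat.not_lt.2 h]

theorem Nat.xor_succ_eq_two_pow_sub_one (k : ℕ) : ∃ n, k ^^^ (k + 1) = 2 ^ (n + 1) - 1 := by
  induction k using Nat.evenOddRec with
  | h0 => exact ⟨0, rfl⟩
  | h_even m _ =>
    refine ⟨0, ?_⟩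
    rw [← Nat.bit_true_apply m, ← Nat.bit_false_apply m, Nat.xor_bit]
    simp
  | h_odd m ih =>
    obtain ⟨n, hn⟩ := ih
    refine ⟨n + 1, ?_⟩
    rw [show 2 * m + 1 + 1 = 2 * (m + 1) by ring, ← Nat.bit_true_apply m,
      ← Nat.bit_false_apply (m + 1), Nat.xor_bit, hn]
    simp only [Bool.bne_false, Nat.bit_true_apply, Nat.pow_succ]
    have := Nat.one_le_two_pow (n := n)
    omega

theorem stmt_18 (k : ℕ) :
    ∃ t : ℕ, (k ^^^ (k / 2)) ^^^ ((k + 1) ^^^ ((k + 1) / 2)) = 2 ^ t := by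
  obtain ⟨n, hn⟩ := Nat.xor_succ_eq_two_pow_sub_one k
  refine ⟨n, ?_⟩
  rw [← grayCode, ← grayCode, ← grayCode_xor, hn, grayCode_two_pow_sub_one]
end
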